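/- arXiv:2409.00599 — 2 statements merged into one kernel-verified Lean document; each statement's English description precedes it below -/
import Mathlib

section
/- For a 3×3 symmetric matrix A with diagonal entries 2, the congruence transformation A ↦ (D^{(k,l)})^T A D^{(k,l)} is independent of the choice of l ∈ {1,2,3}\{k}: for k = 3, (D^{(3,1)})^T A D^{(3,1)} = (D^{(3,2)})^T A D^{(3,2)}, where D^{(3,1)} has entry a_{31} in position (3,1), -1 in position (1,1), 1 in positions (2,2),(3,3), zero elsewhere, and D^{(3,2)} has entry a_{32} in position (3,2), -1 in position (2,2), 1 in positions (1,1),(3,3), zero elsewhere. -/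
open Matrix

/-- The congruence matrix `D^{(k,l)}` with `(k,l)`-entry `a` (the entry `a_{kl}` of the
pseudo-Cartan companion), `(l,l)`-entry `-1`, `(r,r)`-entry `1` for `r ≠ l`, and `0` elsewhere. -/
def Dmat (a : ℤ) (k l : Fin 3) : Matrix (Fin 3) (Fin 3) ℤ :=
  Matrix.of fun r s =>
    if r = k ∧ s = l then a
    else if r = s then (if r = l then -1 else 1)
    else 0

theorem pseudoCartan_mutation_well_defined (A : Matrix (Fin 3) (Fin 3) ℤ)
    (hsym : Aᵀ = A) (hdiag : ∀ i, A i i = 2) :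
    (Dmat (A 2 0) 2 0)ᵀ * A * Dmat (A 2 0) 2 0 =
      (Dmat (A 2 1) 2 1)ᵀ * A * Dmat (A 2 1) 2 1 := by
  have h01 : A 0 1 = A 1 0 := by (conv_lhs => rw [← hsym]); rfl
  have h02 : A 0 2 = A 2 0 := by (conv_lhs => rw [← hsym]); rfl
  have h12 : A 1 2 = A 2 1 := by (conv_lhs => rw [← hsym]); rfl
  have h0 := hdiag 0; have h1 := hdiag 1; have h2 := hdiag 2
  ext i j
  fin_cases i <;> fin_cases j <;>
    simp [Dmat, Matrix.mul_apply, Fin.sum_univ_succ, h01, h02, h12, h0, h1, h2] <;>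
    ring
end

section
/- For a symmetric 3×3 matrix A with diagonal entries 2, suppose A = G^T A₀ G for some 3×3 integer matrix G and fixed symmetric matrix A₀. Let N = J_u + m·E^{1u} for u ∈ {2,3}, where m equals the (1,u) off-diagonal entry of A. Then (GN)^T A₀ (GN) equals the pseudo-Cartan mutation of A at vertex 1, namely the matrix obtained from A by replacing the (2,3) and (3,2) entries c with a_{12}a_{13} - c. -/
open Matrix

/-!
Congruence by `G` turns `A₀` into `A`, so congruence by `G * N` turns it into `Nᵀ * A * N`,
the Gram matrix of the form `A` on the columns `e₀, m e₀ - eᵤ, e_w` of `N`, where `m = a₀ᵤ` and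
`{u, w} = {1, 2}`. Since `a₀₀ = 2`, the new vector pairs with `e₀` to `2m - a₀ᵤ = a₀ᵤ`, with itself
to `2m² - 2m a₀ᵤ + 2 = 2`, and with `e_w` to `a₀₁ a₀₂ - a₁₂`: this is exactly the mutation.
-/

/-- `J_u`: identity matrix with the `(u,u)`-entry replaced by `-1`. -/
def Jmat (u : Fin 3) : Matrix (Fin 3) (Fin 3) ℤ :=
  Matrix.of fun i j => if i = j then (if i = u then -1 else 1) else 0

/-- The paper's vertex 1 is the index `0` here. -/
def pseudoCartanMutation (A : Matrix (Fin 3) (Fin 3) ℤ) : Matrix (Fin 3) (Fin 3) ℤ :=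
  Matrix.of fun i j =>
    if (i = 1 ∧ j = 2) ∨ (i = 2 ∧ j = 1) then A 0 1 * A 0 2 - A 1 2 else A i j

theorem pseudoCartanMutation_fin_three (a b c : ℤ) :
    pseudoCartanMutation !![2, a, b; a, 2, c; b, c, 2] =
      !![2, a, b; a, 2, a * b - c; b, a * b - c, 2] := by
  ext i j
  fin_cases i <;> fin_cases j <;> simp [pseudoCartanMutation]

theorem exists_eq_fin_three_of_isSymm {A : Matrix (Fin 3) (Fin 3) ℤ} (hsym : A.IsSymm)
    (hdiag : ∀ i, A i i = 2) : ∃ a b c, A = !![2, a, b; a, 2, c; b, c, 2] :=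
  ⟨A 0 1, A 0 2, A 1 2, by rw [eta_fin_three A]; simp [hdiag, hsym.apply]⟩

theorem Jmat_one_add_single (m : ℤ) :
    Jmat 1 + single 0 1 m = !![1, m, 0; 0, -1, 0; 0, 0, 1] := by
  ext i j
  fin_cases i <;> fin_cases j <;> simp [Jmat]

theorem Jmat_two_add_single (m : ℤ) :
    Jmat 2 + single 0 2 m = !![1, 0, m; 0, 1, 0; 0, 0, -1] := by
  ext i j
  fin_cases i <;> fin_cases j <;> simp [Jmat]

theorem transpose_mul_mul_mul_eq {l m n R : Type*} [Fintype l] [Fintype m] [CommSemiring R]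
    (A₀ : Matrix l l R) (G : Matrix l m R) (N : Matrix m n R) :
    (G * N)ᵀ * A₀ * (G * N) = Nᵀ * (Gᵀ * A₀ * G) * N := by
  simp only [transpose_mul, Matrix.mul_assoc]

theorem transpose_mul_mul_eq_pseudoCartanMutation {A : Matrix (Fin 3) (Fin 3) ℤ}
    (hsym : A.IsSymm) (hdiag : ∀ i, A i i = 2) {u : Fin 3} (hu : u = 1 ∨ u = 2) :
    (Jmat u + single 0 u (A 0 u))ᵀ * A * (Jmat u + single 0 u (A 0 u)) =
      pseudoCartanMutation A := by
  obtain ⟨a, b, c, rfl⟩ := exists_eq_fin_three_of_isSymm hsym hdiag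
  rw [pseudoCartanMutation_fin_three]
  rcases hu with rfl | rfl <;> simp only [Jmat_one_add_single, Jmat_two_add_single] <;>
    ext i j <;> fin_cases i <;> fin_cases j <;> simp [mul_apply, Fin.sum_univ_three] <;> ring

theorem inductive_step_general (A A₀ G : Matrix (Fin 3) (Fin 3) ℤ)
    (hsym : Aᵀ = A) (hdiag : ∀ i, A i i = 2)
    (hAG : A = Gᵀ * A₀ * G) (u : Fin 3) (hu : u = 1 ∨ u = 2) :
    let N : Matrix (Fin 3) (Fin 3) ℤ := Jmat u + Matrix.single 0 u (A 0 u)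
    (G * N)ᵀ * A₀ * (G * N) =
      Matrix.of fun i j =>
        if (i = 1 ∧ j = 2) ∨ (i = 2 ∧ j = 1) then A 0 1 * A 0 2 - A 1 2 else A i j := by
  intro N
  rw [transpose_mul_mul_mul_eq, ← hAG]
  exact transpose_mul_mul_eq_pseudoCartanMutation hsym hdiag hu

theorem inductive_step (A A₀ G : Matrix (Fin 3) (Fin 3) ℤ)
    (hsym : Aᵀ = A) (hdiag : ∀ i, A i i = 2) (hA₀ : A₀ᵀ = A₀)
    (hAG : A = Gᵀ * A₀ * G) (u : Fin 3) (hu : u = 1 ∨ u = 2) :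
    let N : Matrix (Fin 3) (Fin 3) ℤ := Jmat u + Matrix.single 0 u (A 0 u)
    (G * N)ᵀ * A₀ * (G * N) =
      Matrix.of fun i j =>
        if (i = 1 ∧ j = 2) ∨ (i = 2 ∧ j = 1) then A 0 1 * A 0 2 - A 1 2 else A i j :=
  inductive_step_general A A₀ G hsym hdiag hAG u hu
end
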